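/- Description of H ∩ S: the intersection of the subgroups H and S of SL(2,ℂ) × SL(2,ℂ) equals the set of pairs (A, εA) with ε ∈ {1,−1} and A a diagonal or antidiagonal matrix in SL(2,ℂ); explicitly, H ∩ S = {(diag(λ,λ⁻¹), ±diag(λ,λ⁻¹)) : λ ∈ ℂˣ} ∪ {(antidiag(η,−η⁻¹), ±antidiag(η,−η⁻¹)) : η ∈ ℂˣ}, where antidiag(η,−η⁻¹) denotes the matrix with rows (0, η), (−η⁻¹, 0). -/

import Mathlib

open Matrix

abbrev SL2 := Matrix.SpecialLinearGroup (Fin 2) ℂ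

instance : Fact (Even (Fintype.card (Fin 2))) := ⟨by simp⟩

/-- The subgroup `H = {(A, εA) : A ∈ SL(2,ℂ), ε ∈ {1,−1}}` of `SL(2,ℂ) × SL(2,ℂ)`. -/
def Hsub : Subgroup (SL2 × SL2) where
  carrier := {p | p.2 = p.1 ∨ p.2 = -p.1}
  one_mem' := Or.inl rfl
  mul_mem' := by
    intro a b ha hb
    simp only [Set.mem_setOf_eq, Prod.snd_mul, Prod.fst_mul] at *
    rcases ha with ha | ha <;> rcases hb with hb | hb <;> rw [ha, hb] <;>
      simp [mul_neg, neg_mul, neg_neg]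
  inv_mem' := by
    intro a ha
    simp only [Set.mem_setOf_eq, Prod.snd_inv, Prod.fst_inv] at *
    rcases ha with ha | ha <;> rw [ha] <;> simp [inv_neg]

/-- The subgroup `S` of `SL(2,ℂ) × SL(2,ℂ)` consisting of the pairs `(A,B)` with `A`
and `B` both diagonal or both antidiagonal. -/
def Ssub : Subgroup (SL2 × SL2) where
  carrier := {p |
    ((p.1 : Matrix (Fin 2) (Fin 2) ℂ) 0 1 = 0 ∧ (p.1 : Matrix (Fin 2) (Fin 2) ℂ) 1 0 = 0 ∧
     (p.2 : Matrix (Fin 2) (Fin 2) ℂ) 0 1 = 0 ∧ (p.2 : Matrix (Fin 2) (Fin 2) ℂ) 1 0 = 0) ∨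
    ((p.1 : Matrix (Fin 2) (Fin 2) ℂ) 0 0 = 0 ∧ (p.1 : Matrix (Fin 2) (Fin 2) ℂ) 1 1 = 0 ∧
     (p.2 : Matrix (Fin 2) (Fin 2) ℂ) 0 0 = 0 ∧ (p.2 : Matrix (Fin 2) (Fin 2) ℂ) 1 1 = 0)}
  one_mem' := by
    left
    simp [Matrix.SpecialLinearGroup.coe_one, Matrix.one_apply]
  mul_mem' := by
    intro a b ha hb
    rcases ha with ⟨h1, h2, h3, h4⟩ | ⟨h1, h2, h3, h4⟩ <;>
      rcases hb with ⟨g1, g2, g3, g4⟩ | ⟨g1, g2, g3, g4⟩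
    · left
      refine ⟨?_, ?_, ?_, ?_⟩ <;>
        simp [Prod.fst_mul, Prod.snd_mul, Matrix.mul_apply, Fin.sum_univ_two,
          h1, h2, h3, h4, g1, g2, g3, g4]
    · right
      refine ⟨?_, ?_, ?_, ?_⟩ <;>
        simp [Prod.fst_mul, Prod.snd_mul, Matrix.mul_apply, Fin.sum_univ_two,
          h1, h2, h3, h4, g1, g2, g3, g4]
    · right
      refine ⟨?_, ?_, ?_, ?_⟩ <;>
        simp [Prod.fst_mul, Prod.snd_mul, Matrix.mul_apply, Fin.sum_univ_two,
          h1, h2, h3, h4, g1, g2, g3, g4]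
    · left
      refine ⟨?_, ?_, ?_, ?_⟩ <;>
        simp [Prod.fst_mul, Prod.snd_mul, Matrix.mul_apply, Fin.sum_univ_two,
          h1, h2, h3, h4, g1, g2, g3, g4]
  inv_mem' := by
    intro a ha
    rcases ha with ⟨h1, h2, h3, h4⟩ | ⟨h1, h2, h3, h4⟩
    · left
      refine ⟨?_, ?_, ?_, ?_⟩ <;>
        simp [Prod.fst_inv, Prod.snd_inv, Matrix.SpecialLinearGroup.coe_inv,
          Matrix.adjugate_fin_two, h1, h2, h3, h4]
    · right
      refine ⟨?_, ?_, ?_, ?_⟩ <;>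
        simp [Prod.fst_inv, Prod.snd_inv, Matrix.SpecialLinearGroup.coe_inv,
          Matrix.adjugate_fin_two, h1, h2, h3, h4]

/-- The diagonal matrix `diag(t, t⁻¹)` as an element of `SL(2,ℂ)`. -/
def dmat (t : ℂˣ) : SL2 :=
  ⟨!![(t : ℂ), 0; 0, ((t⁻¹ : ℂˣ) : ℂ)], by simp [Matrix.det_fin_two_of]⟩

lemma dmat_one : dmat 1 = 1 := by
  apply Subtype.ext
  simp only [dmat, Matrix.SpecialLinearGroup.coe_one, Matrix.one_fin_two]
  norm_num

lemma dmat_mul (s t : ℂˣ) : dmat (s * t) = dmat s * dmat t := by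
  apply Subtype.ext
  rw [Matrix.SpecialLinearGroup.coe_mul]
  ext i j
  fin_cases i <;> fin_cases j <;>
    simp [dmat, Matrix.mul_apply, Fin.sum_univ_two, mul_comm]

lemma dmat_inv (t : ℂˣ) : (dmat t)⁻¹ = dmat t⁻¹ := by
  apply Subtype.ext
  rw [Matrix.SpecialLinearGroup.coe_inv]
  ext i j
  fin_cases i <;> fin_cases j <;>
    simp [dmat, Matrix.adjugate_fin_two]

/-- The antidiagonal matrix with rows `(0, η)`, `(−η⁻¹, 0)` as an element of
`SL(2,ℂ)`. -/
def amat (η : ℂˣ) : SL2 :=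
  ⟨!![0, (η : ℂ); -((η⁻¹ : ℂˣ) : ℂ), 0], by simp [Matrix.det_fin_two_of]⟩

open Matrix.SpecialLinearGroup

lemma exists_dmat_eq_iff (A : SL2) : (∃ l, dmat l = A) ↔ A 0 1 = 0 ∧ A 1 0 = 0 := by
  refine ⟨by rintro ⟨l, rfl⟩; simp [dmat], ?_⟩
  induction A using fin_two_induction with | h a b c d hdet =>
  rintro ⟨rfl : b = 0, rfl : c = 0⟩
  have had : a * d = 1 := by simpa using hdet
  refine ⟨Units.mk0 a (left_ne_zero_of_mul_eq_one had), ?_⟩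
  ext i j
  fin_cases i <;> fin_cases j <;> simp [dmat, eq_inv_of_mul_eq_one_right had]

lemma exists_amat_eq_iff (A : SL2) : (∃ e, amat e = A) ↔ A 0 0 = 0 ∧ A 1 1 = 0 := by
  refine ⟨by rintro ⟨e, rfl⟩; simp [amat], ?_⟩
  induction A using fin_two_induction with | h a b c d hdet =>
  rintro ⟨rfl : a = 0, rfl : d = 0⟩
  have hbc : b * -c = 1 := by simpa using hdet
  refine ⟨Units.mk0 b (left_ne_zero_of_mul_eq_one hbc), ?_⟩
  ext i j
  fin_cases i <;> fin_cases j <;> simp [amat, ← eq_inv_of_mul_eq_one_right hbc]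

/-- Once `B = ±A`, the conditions that `S` puts on `B` repeat those on `A`. -/
lemma mem_Hsub_inf_Ssub_iff {A B : SL2} : (A, B) ∈ Hsub ⊓ Ssub ↔
    (B = A ∨ B = -A) ∧ ((A 0 1 = 0 ∧ A 1 0 = 0) ∨ (A 0 0 = 0 ∧ A 1 1 = 0)) := by
  refine and_congr_right fun (hB : B = A ∨ B = -A) => ?_
  rcases hB with rfl | rfl <;> simp [Ssub, coe_neg] <;> tauto

/-- **Description of `H ∩ S`.** The intersection of the subgroups `H` and `S` of
`SL(2,ℂ) × SL(2,ℂ)` is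
`{(diag(λ,λ⁻¹), ±diag(λ,λ⁻¹)) : λ ∈ ℂˣ} ∪ {(antidiag(η,−η⁻¹), ±antidiag(η,−η⁻¹)) : η ∈ ℂˣ}`. -/
theorem H_inf_S_description :
    ((Hsub ⊓ Ssub : Subgroup (SL2 × SL2)) : Set (SL2 × SL2)) =
      {p | ∃ l : ℂˣ, p = (dmat l, dmat l) ∨ p = (dmat l, -dmat l)} ∪
      {p | ∃ e : ℂˣ, p = (amat e, amat e) ∨ p = (amat e, -amat e)} := by
  ext ⟨A, B⟩
  simp only [SetLike.mem_coe, mem_Hsub_inf_Ssub_iff, ← exists_dmat_eq_iff, ← exists_amat_eq_iff,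
    Set.mem_union, Set.mem_ofPred_eq, Prod.mk.injEq]
  constructor
  · rintro ⟨hB, ⟨l, rfl⟩ | ⟨e, rfl⟩⟩
    · exact Or.inl ⟨l, hB.imp (⟨rfl, ·⟩) (⟨rfl, ·⟩)⟩
    · exact Or.inr ⟨e, hB.imp (⟨rfl, ·⟩) (⟨rfl, ·⟩)⟩
  · rintro (⟨l, ⟨rfl, rfl⟩ | ⟨rfl, rfl⟩⟩ | ⟨e, ⟨rfl, rfl⟩ | ⟨rfl, rfl⟩⟩) <;> simp
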